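/- arXiv:2204.07785 — 4 statements merged into one kernel-verified Lean document; each statement's English description precedes it below -/
import Mathlib

section
/- For every integer m ≥ 2 there exists δ > 0 such that for all real v with |v| < δ, the series ∑_{n ≥ 1} t(m, {1}^{n−1}) v^{n−1} converges absolutely and equals the generalized hypergeometric function _{m+1}F_m with upper parameters (1+v)/2, 1, and 1/2 repeated m−1 times, lower parameters 3/2 repeated m times, evaluated at 1. -/
open scoped BigOperators

/-- The multiple `t`-value of an index `K = (k₁, …, kₙ)` (a list of positive integers):
`t(K) = ∑_{m₁ > ⋯ > mₙ > 0, all mᵢ odd} 1 / (m₁^{k₁} ⋯ mₙ^{kₙ})`. -/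
noncomputable def multT (K : List ℕ) : ℝ :=
  ∑' m : Fin K.length → ℕ,
    if (∀ i, Odd (m i)) ∧ (∀ i j : Fin K.length, i < j → m j < m i) then
      ∏ i, ((m i : ℝ) ^ K.get i)⁻¹
    else 0

/-- The multiple `t`-star value of an index `K = (k₁, …, kₙ)`:
`t*(K) = ∑_{m₁ ≥ ⋯ ≥ mₙ > 0, all mᵢ odd} 1 / (m₁^{k₁} ⋯ mₙ^{kₙ})`. -/
noncomputable def multTStar (K : List ℕ) : ℝ :=
  ∑' m : Fin K.length → ℕ,
    if (∀ i, Odd (m i)) ∧ (∀ i j : Fin K.length, i < j → m j ≤ m i) then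
      ∏ i, ((m i : ℝ) ^ K.get i)⁻¹
    else 0

/-- An index (list of positive integers) is admissible if its first entry is `> 1`. -/
def Admissible (K : List ℕ) : Prop := (∀ i ∈ K, 1 ≤ i) ∧ 2 ≤ K.headI

instance : DecidablePred Admissible := fun K =>
  inferInstanceAs (Decidable ((∀ i ∈ K, 1 ≤ i) ∧ 2 ≤ K.headI))

/-- `G0h k n s` is the sum of multiple `t`-values over all admissible indices of
weight `k`, depth `n` and height `s`. -/
noncomputable def G0h (k n s : ℕ) : ℝ :=
  ∑' K : List ℕ,
    if Admissible K ∧ K.sum = k ∧ K.length = n ∧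
        K.countP (fun i => decide (2 ≤ i)) = s then
      multT K
    else 0

/-- `G0hStar k n s` is the sum of multiple `t`-star values over all admissible indices of
weight `k`, depth `n` and height `s`. -/
noncomputable def G0hStar (k n s : ℕ) : ℝ :=
  ∑' K : List ℕ,
    if Admissible K ∧ K.sum = k ∧ K.length = n ∧
        K.countP (fun i => decide (2 ≤ i)) = s then
      multTStar K
    else 0

/-- `G0d k n` is the sum of multiple `t`-values over all admissible indices of
weight `k` and depth `n`. -/
noncomputable def G0d (k n : ℕ) : ℝ :=
  ∑' K : List ℕ,
    if Admissible K ∧ K.sum = k ∧ K.length = n then multT K else 0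

/-- `G0dStar k n` is the sum of multiple `t`-star values over all admissible indices of
weight `k` and depth `n`. -/
noncomputable def G0dStar (k n : ℕ) : ℝ :=
  ∑' K : List ℕ,
    if Admissible K ∧ K.sum = k ∧ K.length = n then multTStar K else 0

/-- The single `t`-value `t(n) = ∑_{m odd, m > 0} 1 / m^n`. -/
noncomputable def tval (n : ℕ) : ℝ := ∑' m : ℕ, 1 / (2 * (m : ℝ) + 1) ^ n

/-- The ascending Pochhammer symbol `(a)ₙ = a (a+1) ⋯ (a+n-1)`. -/
noncomputable def poch (a : ℂ) (n : ℕ) : ℂ := ∏ i ∈ Finset.range n, (a + i)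

/-- The generalized hypergeometric function `₃F₂(a, b, c; d, e; z)`. -/
noncomputable def hyp3F2 (a b c d e z : ℂ) : ℂ :=
  ∑' n : ℕ, poch a n * poch b n * poch c n /
      ((n.factorial : ℂ) * poch d n * poch e n) * z ^ n

/-- The generalized hypergeometric function with upper parameters `as` and lower
parameters `bs`. -/
noncomputable def hypF (as bs : List ℂ) (z : ℂ) : ℂ :=
  ∑' n : ℕ, (as.map fun a => poch a n).prod /
      ((n.factorial : ℂ) * (bs.map fun b => poch b n).prod) * z ^ n

/-- The one-variable multiple polylogarithm
`L_K(z) = ∑_{m₁ > ⋯ > mₙ > 0, all mᵢ odd} z^{m₁} / (m₁^{k₁} ⋯ mₙ^{kₙ})`. -/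
noncomputable def Lt (K : List ℕ) (z : ℝ) : ℝ :=
  ∑' m : Fin K.length → ℕ,
    if h : (∀ i, Odd (m i)) ∧ (∀ i j : Fin K.length, i < j → m j < m i) ∧
        0 < K.length then
      z ^ (m ⟨0, h.2.2⟩) * ∏ i, ((m i : ℝ) ^ K.get i)⁻¹
    else 0

/-- The one-variable star multiple polylogarithm
`L*_K(z) = ∑_{m₁ ≥ ⋯ ≥ mₙ > 0, all mᵢ odd} z^{m₁} / (m₁^{k₁} ⋯ mₙ^{kₙ})`. -/
noncomputable def LtStar (K : List ℕ) (z : ℝ) : ℝ :=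
  ∑' m : Fin K.length → ℕ,
    if h : (∀ i, Odd (m i)) ∧ (∀ i j : Fin K.length, i < j → m j ≤ m i) ∧
        0 < K.length then
      z ^ (m ⟨0, h.2.2⟩) * ∏ i, ((m i : ℝ) ^ K.get i)⁻¹
    else 0

/-- `G0hz k n s z` is the sum of `L_K(z)` over all admissible indices `K` of
weight `k`, depth `n` and height `s`. -/
noncomputable def G0hz (k n s : ℕ) (z : ℝ) : ℝ :=
  ∑' K : List ℕ,
    if Admissible K ∧ K.sum = k ∧ K.length = n ∧
        K.countP (fun i => decide (2 ≤ i)) = s then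
      Lt K z
    else 0

/-- `G0hzStar k n s z` is the sum of `L*_K(z)` over all admissible indices `K` of
weight `k`, depth `n` and height `s`. -/
noncomputable def G0hzStar (k n s : ℕ) (z : ℝ) : ℝ :=
  ∑' K : List ℕ,
    if Admissible K ∧ K.sum = k ∧ K.length = n ∧
        K.countP (fun i => decide (2 ≤ i)) = s then
      LtStar K z
    else 0

/-!
Writing the odd summation variables as `2 dᵢ + 1`, the value `t(m, {1}ⁿ)` becomes
`∑ₖ (2k+1)^{-m} eₙ(k)`, where `eₙ(k)` is the `n`-th elementary symmetric polynomial in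
`1, 1/3, …, 1/(2k-1)`: the first variable is `2k+1` and the other `n` variables, read as a set,
form an `n`-subset of `{0, …, k-1}`. Since `∑ₙ eₙ(k) vⁿ = ∏_{j<k} (1 + v/(2j+1))`, summing over `n`
first gives `∑ₖ (2k+1)^{-m} ∏_{j<k} (1 + v/(2j+1))`. The identities
`∏_{j<k} (1 + v/(2j+1)) = ((1+v)/2)ₖ / (1/2)ₖ` and `(3/2)ₖ = (2k+1) (1/2)ₖ` match this term by term
with the hypergeometric series. For `|v| ≤ 1/2` the product is at most `√(2k+1)`, so for `m ≥ 2`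
the double series converges absolutely and the interchange is justified.
-/

open Finset

theorem Fin.strictAnti_cons_iff {α : Type*} [Preorder α] {n : ℕ} (a : α) (d : Fin n → α) :
    StrictAnti (Fin.cons a d : Fin (n + 1) → α) ↔ StrictAnti d ∧ ∀ i, d i < a := by
  simpa [StrictAnti, Fin.forall_fin_succ, Fin.succ_lt_succ_iff, Fin.succ_pos] using and_comm

theorem sum_strictAnti_prod_eq_sum_powersetCard {α R : Type*} [LinearOrder α] [CommSemiring R]
    (n : ℕ) (s : Finset α) (f : α → R) :
    ∑ d ∈ Fintype.piFinset (fun _ : Fin n => s) with StrictAnti d, ∏ i, f (d i)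
      = ∑ t ∈ s.powersetCard n, ∏ j ∈ t, f j := by
  refine sum_bij' (fun d _ => Finset.image d univ)
    (fun t ht i => t.orderEmbOfFin (mem_powersetCard.1 ht).2 i.rev) ?_ ?_ ?_ ?_ ?_
  · intro d hd
    simp only [mem_filter, Fintype.mem_piFinset] at hd
    refine mem_powersetCard.2 ⟨fun x hx => ?_, ?_⟩
    · obtain ⟨i, -, rfl⟩ := mem_image.1 hx
      exact hd.1 i
    · rw [card_image_of_injective _ hd.2.injective, card_univ, Fintype.card_fin]
  · intro t ht
    refine mem_filter.2 ⟨Fintype.mem_piFinset.2 fun i =>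
      (mem_powersetCard.1 ht).1 (orderEmbOfFin_mem _ _ _), fun i j hij =>
        (t.orderEmbOfFin _).strictMono (Fin.rev_lt_rev.2 hij)⟩
  · intro d hd
    have hmono : StrictMono fun i : Fin n => d i.rev := fun i j hij =>
      (mem_filter.1 hd).2 (Fin.rev_lt_rev.2 hij)
    funext i
    simpa using (congrFun (orderEmbOfFin_unique _
      (fun i => mem_image_of_mem _ (mem_univ _)) hmono) i.rev).symm
  · intro t ht
    apply coe_injective
    rw [coe_image, coe_univ, Set.image_univ,
      ← range_orderEmbOfFin t (mem_powersetCard.1 ht).2]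
    exact Fin.rev_surjective.range_comp _
  · intro d hd
    rw [prod_image fun i _ j _ hij => (mem_filter.1 hd).2.injective hij]

theorem hasSum_ite_strictAnti_prod {α R : Type*} [LinearOrder α] [CommSemiring R]
    [TopologicalSpace R] (n : ℕ) (s : Finset α) (f : α → R) :
    HasSum (fun d : Fin n → α => if StrictAnti d ∧ ∀ i, d i ∈ s then ∏ i, f (d i) else 0)
      (∑ t ∈ s.powersetCard n, ∏ j ∈ t, f j) := by
  rw [← sum_strictAnti_prod_eq_sum_powersetCard, sum_filter]
  convert (hasSum_sum_of_ne_finset_zero (s := Fintype.piFinset fun _ : Fin n => s) ?_ :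
    HasSum _ _) using 1
  · exact sum_congr rfl fun d hd => by simp [Fintype.mem_piFinset.1 hd]
  · exact fun d hd => if_neg fun h => hd (Fintype.mem_piFinset.2 h.2)

theorem multT_eq_tsum_strictAnti (K : List ℕ) :
    multT K = ∑' d : Fin K.length → ℕ,
      if StrictAnti d then ∏ i, ((2 * (d i : ℝ) + 1) ^ K.get i)⁻¹ else 0 := by
  have hinj : Function.Injective fun (d : Fin K.length → ℕ) i => 2 * d i + 1 :=
    fun d e hde => funext fun i => by have : 2 * d i + 1 = 2 * e i + 1 := congrFun hde i; omega
  rw [multT, ← hinj.tsum_eq]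
  · refine tsum_congr fun d => ?_
    have hanti : StrictAnti (fun i => 2 * d i + 1) ↔ StrictAnti d :=
      ⟨fun h i j hij => by have := h hij; dsimp only at this; omega,
        fun h i j hij => by have := h hij; dsimp only; omega⟩
    simp only [odd_two_mul_add_one, implies_true, true_and]
    refine if_congr hanti ?_ rfl
    push_cast
    rfl
  · intro c hc
    have hodd : ∀ i, Odd (c i) := by
      by_contra h
      exact hc (if_neg fun h' => h h'.1)
    exact ⟨fun i => c i / 2, funext fun i => Nat.two_mul_div_two_add_one_of_odd (hodd i)⟩

noncomputable def oddInvEsymm (n k : ℕ) : ℝ :=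
  ∑ t ∈ powersetCard n (range k), ∏ j ∈ t, (2 * (j : ℝ) + 1)⁻¹

theorem oddInvEsymm_nonneg (n k : ℕ) : 0 ≤ oddInvEsymm n k := by
  unfold oddInvEsymm; positivity

theorem hasSum_oddInvEsymm_mul_pow (x : ℝ) (k : ℕ) :
    HasSum (fun n => oddInvEsymm n k * x ^ n) (∏ j ∈ range k, (1 + x / (2 * j + 1))) := by
  have hzero : ∀ n ∉ range (k + 1), oddInvEsymm n k * x ^ n = 0 := fun n hn => by
    rw [oddInvEsymm, powersetCard_eq_empty.2 (by simpa using hn), sum_empty, zero_mul]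
  convert (hasSum_sum_of_ne_finset_zero hzero : HasSum _ _) using 1
  rw [prod_one_add, sum_powerset, card_range]
  refine sum_congr rfl fun n _ => ?_
  rw [oddInvEsymm, sum_mul]
  refine sum_congr rfl fun t ht => ?_
  simp only [div_eq_mul_inv, prod_mul_distrib, prod_const, (mem_powersetCard.1 ht).2]
  ring

theorem sq_prod_one_add_div_odd_le {x : ℝ} (hx₀ : 0 ≤ x) (hx₁ : x ≤ 1 / 2) (k : ℕ) :
    (∏ j ∈ range k, (1 + x / (2 * j + 1))) ^ 2 ≤ 2 * k + 1 := by
  -- each factor satisfies `(1 + x/(2j+1))² ≤ (2j+3)/(2j+1)`, so the squares telescope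
  induction k with
  | zero => simp
  | succ k ih =>
    have hk : (0 : ℝ) < 2 * k + 1 := by positivity
    rw [prod_range_succ, mul_pow]
    calc (∏ j ∈ range k, (1 + x / (2 * j + 1))) ^ 2 * (1 + x / (2 * k + 1)) ^ 2
        ≤ (2 * k + 1) * (1 + x / (2 * k + 1)) ^ 2 := by gcongr
      _ = (2 * k + 1 + x) ^ 2 / (2 * k + 1) := by field_simp
      _ ≤ 2 * (k + 1 : ℕ) + 1 := by
        rw [div_le_iff₀ hk]; push_cast; nlinarith

theorem summable_inv_odd_pow_mul_prod {m : ℕ} (hm : 2 ≤ m) {x : ℝ} (hx₀ : 0 ≤ x)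
    (hx₁ : x ≤ 1 / 2) :
    Summable fun k : ℕ => ((2 * k + 1 : ℝ) ^ m)⁻¹ * ∏ j ∈ range k, (1 + x / (2 * j + 1)) := by
  set P : ℕ → ℝ := fun k => ∏ j ∈ range k, (1 + x / (2 * j + 1))
  have hP₀ : ∀ k, 0 ≤ P k := fun k => by positivity
  have hP := sq_prod_one_add_div_odd_le hx₀ hx₁
  have hsum : Summable fun k : ℕ => (((2 * k + 1 : ℕ) : ℝ) ^ (3 / 2 : ℝ))⁻¹ :=
    (Real.summable_nat_rpow_inv.2 (by norm_num)).comp_injective fun a b h => by omega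
  refine hsum.of_nonneg_of_le (fun k => mul_nonneg (by positivity) (hP₀ k)) fun k => ?_
  have hy : (1 : ℝ) ≤ 2 * k + 1 := by linarith [k.cast_nonneg (α := ℝ)]
  have hPy : P k ≤ (2 * k + 1 : ℝ) ^ (1 / 2 : ℝ) := by
    rw [← Real.sqrt_eq_rpow]; exact Real.le_sqrt_of_sq_le (hP k)
  have hsplit :
      (2 * k + 1 : ℝ) ^ 2 = (2 * k + 1 : ℝ) ^ (3 / 2 : ℝ) * (2 * k + 1) ^ (1 / 2 : ℝ) := by
    rw [← Real.rpow_add (by positivity)]; norm_num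
  calc ((2 * k + 1 : ℝ) ^ m)⁻¹ * P k
      ≤ ((2 * k + 1 : ℝ) ^ 2)⁻¹ * (2 * k + 1) ^ (1 / 2 : ℝ) := by
        gcongr
    _ = (((2 * k + 1 : ℕ) : ℝ) ^ (3 / 2 : ℝ))⁻¹ := by
        rw [hsplit]; push_cast; field_simp

theorem oddInvEsymm_le (n k : ℕ) :
    oddInvEsymm n k ≤ 2 ^ n * ∏ j ∈ range k, (1 + 1 / 2 / (2 * (j : ℝ) + 1)) := by
  have h := le_hasSum (hasSum_oddInvEsymm_mul_pow (1 / 2) k) n fun j _ =>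
    mul_nonneg (oddInvEsymm_nonneg j k) (by positivity)
  rw [← div_le_iff₀' (by positivity)]
  simpa [div_eq_mul_inv] using h

theorem summable_inv_odd_pow_mul_oddInvEsymm {m : ℕ} (hm : 2 ≤ m) (n : ℕ) :
    Summable fun k : ℕ => ((2 * k + 1 : ℝ) ^ m)⁻¹ * oddInvEsymm n k := by
  refine ((summable_inv_odd_pow_mul_prod hm (x := 1 / 2) (by norm_num) le_rfl).mul_left
    (2 ^ n)).of_nonneg_of_le (fun k => mul_nonneg (by positivity) (oddInvEsymm_nonneg n k))
    fun k => ?_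
  rw [mul_left_comm]
  exact mul_le_mul_of_nonneg_left (oddInvEsymm_le n k) (by positivity)

theorem hasSum_multT_cons_replicate_one {m : ℕ} (hm : 2 ≤ m) (n : ℕ) :
    HasSum (fun k : ℕ => ((2 * k + 1 : ℝ) ^ m)⁻¹ * oddInvEsymm n k)
      (multT (m :: List.replicate n 1)) := by
  set L := List.replicate n 1
  set F : (Fin (L.length + 1) → ℕ) → ℝ := fun d =>
    if StrictAnti d then ∏ i, ((2 * (d i : ℝ) + 1) ^ (m :: L).get i)⁻¹ else 0
  have hcons : ∀ a d, F (Fin.cons a d) = ((2 * a + 1 : ℝ) ^ m)⁻¹ *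
      if StrictAnti d ∧ ∀ i, d i ∈ range a then ∏ i, (2 * (d i : ℝ) + 1)⁻¹ else 0 := by
    intro a d
    simp [F, L, Fin.strictAnti_cons_iff, Fin.prod_univ_succ, mul_ite, mul_comm]
  have hfiber : ∀ a, HasSum (fun d => F (Fin.cons a d))
      (((2 * a + 1 : ℝ) ^ m)⁻¹ * oddInvEsymm n a) := by
    intro a
    simp only [hcons]
    simpa [L, oddInvEsymm] using (hasSum_ite_strictAnti_prod L.length (range a)
      fun j : ℕ => (2 * (j : ℝ) + 1)⁻¹).mul_left ((2 * a + 1 : ℝ) ^ m)⁻¹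
  have hsummable : Summable fun p : ℕ × (Fin L.length → ℕ) => F (Fin.cons p.1 p.2) := by
    refine (summable_prod_of_nonneg fun p => ?_).2 ⟨fun a => (hfiber a).summable, ?_⟩
    · simp only [Pi.zero_apply, F]; split_ifs <;> positivity
    · simpa only [(hfiber _).tsum_eq] using summable_inv_odd_pow_mul_oddInvEsymm hm n
  rw [multT_eq_tsum_strictAnti]
  change HasSum _ (∑' d, F d)
  rw [← (Fin.consEquiv fun _ => ℕ).tsum_eq]
  exact hsummable.hasSum.prod_fiberwise hfiber

theorem hasSum_multT_mul_pow {m : ℕ} (hm : 2 ≤ m) {v : ℝ} (hv : |v| ≤ 1 / 2) :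
    HasSum (fun n => multT (m :: List.replicate n 1) * v ^ n)
      (∑' k : ℕ, ((2 * k + 1 : ℝ) ^ m)⁻¹ * ∏ j ∈ range k, (1 + v / (2 * j + 1))) := by
  set f : ℕ × ℕ → ℝ := fun p => ((2 * p.1 + 1 : ℝ) ^ m)⁻¹ * (oddInvEsymm p.2 p.1 * v ^ p.2)
  have hrow : ∀ (x : ℝ) (k : ℕ),
      HasSum (fun n => ((2 * k + 1 : ℝ) ^ m)⁻¹ * (oddInvEsymm n k * x ^ n))
        (((2 * k + 1 : ℝ) ^ m)⁻¹ * ∏ j ∈ range k, (1 + x / (2 * j + 1))) :=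
    fun x k => (hasSum_oddInvEsymm_mul_pow x k).mul_left _
  have hcol : ∀ n, HasSum (fun k => f (k, n)) (multT (m :: List.replicate n 1) * v ^ n) :=
    fun n => by
      simpa only [f, mul_assoc] using (hasSum_multT_cons_replicate_one hm n).mul_right (v ^ n)
  have hf : Summable f := by
    refine Summable.of_norm ?_
    have hnorm : (fun p => ‖f p‖) = fun p : ℕ × ℕ =>
        ((2 * p.1 + 1 : ℝ) ^ m)⁻¹ * (oddInvEsymm p.2 p.1 * |v| ^ p.2) := by
      funext p
      have : (0 : ℝ) ≤ 2 * p.1 + 1 := by positivity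
      simp [f, abs_of_nonneg this, abs_of_nonneg (oddInvEsymm_nonneg _ _)]
    rw [hnorm]
    refine (summable_prod_of_nonneg fun p => ?_).2 ⟨fun k => (hrow |v| k).summable, ?_⟩
    · exact mul_nonneg (by positivity) (mul_nonneg (oddInvEsymm_nonneg _ _) (by positivity))
    · simpa only [(hrow |v| _).tsum_eq] using summable_inv_odd_pow_mul_prod hm (abs_nonneg v) hv
  rw [(hf.hasSum.prod_fiberwise (hrow v)).tsum_eq]
  exact ((Equiv.prodComm ℕ ℕ).hasSum_iff.2 hf.hasSum).prod_fiberwise hcol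

theorem poch_one (k : ℕ) : poch 1 k = k.factorial := by
  rw [poch, ← prod_range_add_one_eq_factorial]
  push_cast
  exact prod_congr rfl fun i _ => add_comm _ _

theorem poch_add_one_mul (a : ℂ) (k : ℕ) : poch (a + 1) k * a = poch a k * (a + k) := by
  induction k with
  | zero => simp [poch]
  | succ k ih =>
    simp only [poch, prod_range_succ] at ih ⊢
    push_cast
    linear_combination (a + 1 + k) * ih

theorem half_add_natCast_ne_zero (j : ℕ) : (1 / 2 + j : ℂ) ≠ 0 := by
  have : (1 / 2 + j : ℂ) = ((2 * j + 1 : ℕ) : ℂ) / 2 := by push_cast; ring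
  rw [this]
  exact div_ne_zero (Nat.cast_ne_zero.2 (by omega)) two_ne_zero

theorem poch_half_ne_zero (k : ℕ) : poch (1 / 2) k ≠ 0 :=
  prod_ne_zero_iff.2 fun j _ => half_add_natCast_ne_zero j

theorem poch_one_add_div_two (z : ℂ) (k : ℕ) :
    poch ((1 + z) / 2) k = poch (1 / 2) k * ∏ j ∈ range k, (1 + z / (2 * j + 1)) := by
  rw [poch, poch, ← prod_mul_distrib]
  refine prod_congr rfl fun j _ => ?_
  have : (2 * j + 1 : ℂ) ≠ 0 := by exact_mod_cast (by omega : 2 * j + 1 ≠ 0)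
  field_simp
  ring

theorem hypF_summand_eq {m : ℕ} (hm : 1 ≤ m) (v : ℝ) (k : ℕ) :
    ((((1 + (v : ℂ)) / 2) :: (1 : ℂ) :: List.replicate (m - 1) (1 / 2)).map
        fun a => poch a k).prod /
      ((k.factorial : ℂ) * ((List.replicate m (3 / 2 : ℂ)).map fun b => poch b k).prod) * 1 ^ k
      = ((((2 * k + 1 : ℝ) ^ m)⁻¹ * ∏ j ∈ range k, (1 + v / (2 * j + 1)) : ℝ) : ℂ) := by
  obtain ⟨m, rfl⟩ : ∃ m', m = m' + 1 := ⟨m - 1, by omega⟩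
  have h32 : poch (3 / 2) k = poch (1 / 2) k * (2 * k + 1) := by
    have := poch_add_one_mul (1 / 2) k
    norm_num at this
    linear_combination 2 * this
  have hF : (k.factorial : ℂ) ≠ 0 := Nat.cast_ne_zero.2 k.factorial_ne_zero
  have hP := poch_half_ne_zero k
  have hk : (2 * k + 1 : ℂ) ≠ 0 := by exact_mod_cast (by omega : 2 * k + 1 ≠ 0)
  simp only [List.map_cons, List.prod_cons, List.map_replicate, List.prod_replicate,
    poch_one, poch_one_add_div_two, h32, mul_pow, one_pow, mul_one, Nat.add_sub_cancel]
  push_cast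
  field_simp
  ring

/-- For `m ≥ 2`, the generating function `∑_{n ≥ 1} t(m, {1}^{n-1}) v^{n-1}` equals the
generalized hypergeometric function `_{m+1}F_m((1+v)/2, 1, {1/2}^{m-1}; {3/2}^m; 1)`. -/
theorem height_one_fixed_first_entry_multiple_t (m : ℕ) (hm : 2 ≤ m) :
    ∃ δ > (0 : ℝ), ∀ v : ℝ, |v| < δ →
      Summable (fun n : ℕ => multT (m :: List.replicate n 1) * v ^ n) ∧
      ((∑' n : ℕ, multT (m :: List.replicate n 1) * v ^ n : ℝ) : ℂ)
        = hypF (((1 + (v : ℂ)) / 2) :: (1 : ℂ) :: List.replicate (m - 1) (1 / 2))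
            (List.replicate m (3 / 2)) 1 := by
  refine ⟨1 / 2, by norm_num, fun v hv => ?_⟩
  have h := hasSum_multT_mul_pow hm hv.le
  refine ⟨h.summable, ?_⟩
  rw [h.tsum_eq, hypF, Complex.ofReal_tsum]
  exact tsum_congr fun k => (hypF_summand_eq (by omega) v k).symm
end

section
/- For every integer m ≥ 2 there exists δ > 0 such that for all real v with |v| < δ, the series ∑_{n ≥ 1} t^*(m, {1}^{n−1}) v^{n−1} converges absolutely and equals (1/(1−v)) times the generalized hypergeometric function _{m+1}F_m with upper parameters 1 and 1/2 repeated m times, lower parameters (3−v)/2 and 3/2 repeated m−1 times, evaluated at 1. -/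
open scoped BigOperators

/-!
Splitting an odd tuple `m₁ ≥ m₂ ≥ ⋯ ≥ mₙ₊₁` along its first entry `m₁ = 2a + 1` gives
`t*(m, {1}ⁿ) = ∑ₐ (2a+1)⁻ᵐ hₙ(1, 1/3, …, 1/(2a+1))`, with `hₙ` the complete homogeneous symmetric
polynomial. Against `vⁿ` these have the generating function `∏_{i ≤ a} (1 - v/(2i+1))⁻¹`, which
for `|v| ≤ 1/2` is at most `2√(a+1)`; as `m ≥ 2`, the double series in `a` and `n` then converges
absolutely and can be summed in either order. Finally `(2a+1)⁻ᵐ ∏_{i ≤ a} (1 - v/(2i+1))⁻¹` is the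
`a`-th term of `(1-v)⁻¹ ₘ₊₁Fₘ(1, {1/2}ᵐ; (3-v)/2, {3/2}ᵐ⁻¹; 1)`, by the Pochhammer identities
`(1/2)ₐ₊₁ = ½ (3/2)ₐ` and `((1-v)/2)ₐ₊₁ = ((1-v)/2) ((3-v)/2)ₐ`.
-/

open Finset
open scoped ENNReal

/-- `completeHomSum w n a = ∑_{a ≥ b₁ ≥ ⋯ ≥ bₙ ≥ 0} w b₁ ⋯ w bₙ`, the complete homogeneous
symmetric polynomial `hₙ(w 0, …, w a)`. -/
noncomputable def completeHomSum (w : ℕ → ℝ) : ℕ → ℕ → ℝ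
  | 0, _ => 1
  | n + 1, a => ∑ b ∈ range (a + 1), w b * completeHomSum w n b

namespace completeHomSum

variable {w : ℕ → ℝ}

lemma nonneg (hw : ∀ i, 0 ≤ w i) (n a : ℕ) : 0 ≤ completeHomSum w n a := by
  induction n generalizing a with
  | zero => exact zero_le_one
  | succ n ih => exact sum_nonneg fun b _ => mul_nonneg (hw b) (ih b)

lemma zero_right (n : ℕ) : completeHomSum w n 0 = w 0 ^ n := by
  induction n with
  | zero => rfl
  | succ n ih => simp [completeHomSum, ih, pow_succ, mul_comm]

lemma succ_succ (n a : ℕ) : completeHomSum w (n + 1) (a + 1) =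
    completeHomSum w (n + 1) a + w (a + 1) * completeHomSum w n (a + 1) := by
  rw [completeHomSum, sum_range_succ, ← completeHomSum]

lemma succ_right (n a : ℕ) : completeHomSum w n (a + 1) =
    ∑ j ∈ range (n + 1), completeHomSum w j a * w (a + 1) ^ (n - j) := by
  induction n with
  | zero => simp [completeHomSum]
  | succ n ih =>
    rw [succ_succ, ih, sum_range_succ _ (n + 1), Nat.sub_self, pow_zero, mul_one, add_comm,
      mul_sum]
    congr 1
    refine sum_congr rfl fun j hj => ?_
    rw [Nat.sub_add_comm (mem_range_succ_iff.mp hj), pow_succ]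
    ring

theorem hasSum_mul_pow (hw : ∀ i, 0 ≤ w i) (a : ℕ) {v : ℝ} (hv : ∀ i ≤ a, w i * |v| < 1) :
    HasSum (fun n => completeHomSum w n a * v ^ n) (∏ i ∈ range (a + 1), (1 - w i * v)⁻¹) := by
  induction a generalizing v with
  | zero =>
    have hgeom : ‖w 0 * v‖ < 1 := by simpa [abs_mul, abs_of_nonneg (hw 0)] using hv 0 le_rfl
    simpa [zero_right, mul_pow] using hasSum_geometric_of_norm_lt_one hgeom
  | succ a ih =>
    have hv' : ∀ i ≤ a, w i * |v| < 1 := fun i hi => hv i (by omega)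
    have hgeom : ‖w (a + 1) * v‖ < 1 := by
      simpa [abs_mul, abs_of_nonneg (hw _)] using hv (a + 1) le_rfl
    have hnorm : Summable fun n => ‖completeHomSum w n a * v ^ n‖ := by
      refine (ih (v := |v|) (by simpa using hv')).summable.congr fun n => ?_
      rw [norm_mul, norm_pow, Real.norm_eq_abs, abs_of_nonneg (nonneg hw n a), Real.norm_eq_abs]
    have hcauchy := hasSum_sum_range_mul_of_summable_norm hnorm
      ((summable_geometric_of_lt_one (norm_nonneg _) hgeom).congr fun n => (norm_pow _ n).symm)
    rw [(ih hv').tsum_eq, tsum_geometric_of_norm_lt_one hgeom, ← prod_range_succ] at hcauchy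
    refine hcauchy.congr_fun fun n => ?_
    rw [succ_right, sum_mul]
    refine sum_congr rfl fun j hj => ?_
    rw [mul_pow, ← pow_sub_mul_pow v (mem_range_succ_iff.mp hj)]
    ring

end completeHomSum

theorem hasSum_tsum_mul_pow_of_nonneg {α : Type*} {r : α → ℕ → ℝ} (hr : ∀ a n, 0 ≤ r a n)
    {v : ℝ} {F G : α → ℝ} (hF : ∀ a, HasSum (fun n => r a n * v ^ n) (F a))
    (hG : ∀ a, HasSum (fun n => r a n * |v| ^ n) (G a)) (hGs : Summable G) :
    HasSum (fun n => (∑' a, r a n) * v ^ n) (∑' a, F a) := by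
  have habs : Summable fun p : α × ℕ => r p.1 p.2 * |v| ^ p.2 :=
    (summable_prod_of_nonneg fun p => mul_nonneg (hr _ _) (by positivity)).2
      ⟨fun a => (hG a).summable, by simpa only [(hG _).tsum_eq] using hGs⟩
  have hsum : Summable fun p : α × ℕ => r p.1 p.2 * v ^ p.2 :=
    habs.of_norm_bounded fun p => by
      rw [norm_mul, norm_pow, Real.norm_eq_abs, abs_of_nonneg (hr _ _), Real.norm_eq_abs]
  have hswap : Summable (Function.uncurry fun n a => r a n * v ^ n) := hsum.prod_symm
  have hcomm : HasSum (fun n => ∑' a, r a n * v ^ n) (∑' a, ∑' n, r a n * v ^ n) := by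
    rw [hswap.tsum_comm]
    exact hswap.prod.hasSum
  simpa only [tsum_mul_right, (hF _).tsum_eq] using hcomm

noncomputable def oddInv (i : ℕ) : ℝ := ((2 * i + 1 : ℕ) : ℝ)⁻¹

lemma oddInv_nonneg (i : ℕ) : 0 ≤ oddInv i := inv_nonneg.2 (Nat.cast_nonneg _)

lemma oddInv_le_one (i : ℕ) : oddInv i ≤ 1 := inv_le_one_of_one_le₀ (by simp)

lemma inv_one_sub_oddInv_half (i : ℕ) : (1 - oddInv i / 2)⁻¹ = (4 * i + 2) / (4 * i + 1) := by
  rw [oddInv, inv_eq_iff_eq_inv, inv_div]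
  push_cast
  field_simp
  ring

lemma prod_inv_one_sub_oddInv_half_sq_le (a : ℕ) :
    (∏ i ∈ range (a + 1), (1 - oddInv i / 2)⁻¹) ^ 2 ≤ 4 * (a + 1) := by
  induction a with
  | zero => norm_num [oddInv]
  | succ a ih =>
    have hfactor : (1 - oddInv (a + 1) / 2)⁻¹ ^ 2 * (a + 1) ≤ a + 2 := by
      have hx : (0 : ℝ) ≤ a := a.cast_nonneg
      rw [inv_one_sub_oddInv_half, div_pow, div_mul_eq_mul_div, div_le_iff₀ (by positivity)]
      push_cast
      nlinarith
    rw [prod_range_succ, mul_pow]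
    push_cast
    nlinarith [sq_nonneg ((1 - oddInv (a + 1) / 2)⁻¹)]

lemma prod_inv_one_sub_oddInv_mul_le {v : ℝ} (hv : |v| ≤ 1 / 2) (a : ℕ) :
    ∏ i ∈ range (a + 1), (1 - oddInv i * v)⁻¹ ≤ 2 * √(a + 1) := by
  have hfactor : ∀ i, 0 < 1 - oddInv i / 2 ∧ 1 - oddInv i / 2 ≤ 1 - oddInv i * v := fun i => by
    have := oddInv_le_one i
    have := oddInv_nonneg i
    constructor <;> nlinarith [le_abs_self v]
  calc ∏ i ∈ range (a + 1), (1 - oddInv i * v)⁻¹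
      ≤ ∏ i ∈ range (a + 1), (1 - oddInv i / 2)⁻¹ :=
        prod_le_prod (fun i _ => inv_nonneg.2 ((hfactor i).1.trans_le (hfactor i).2).le)
          fun i _ => inv_anti₀ (hfactor i).1 (hfactor i).2
    _ ≤ 2 * √(a + 1) := by
        refine (pow_le_pow_iff_left₀ (prod_nonneg fun i _ => (inv_pos.2 (hfactor i).1).le)
          (by positivity) two_ne_zero).1 ?_
        rw [mul_pow, Real.sq_sqrt (by positivity)]
        linarith [prod_inv_one_sub_oddInv_half_sq_le a]

lemma summable_oddInv_pow_mul_sqrt {m : ℕ} (hm : 2 ≤ m) :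
    Summable fun a : ℕ => oddInv a ^ m * (2 * √(a + 1)) := by
  refine ((Real.summable_one_div_nat_add_rpow 1 (3 / 2)).2 (by norm_num)).mul_left 2
    |>.of_nonneg_of_le (fun a => mul_nonneg (pow_nonneg (oddInv_nonneg a) m) (by positivity))
    fun a => ?_
  have ha : (0 : ℝ) < a + 1 := by positivity
  have hsqrt : |(a : ℝ) + 1| ^ (3 / 2 : ℝ) = (a + 1) * √(a + 1) := by
    rw [abs_of_pos ha, Real.sqrt_eq_rpow, ← Real.rpow_one_add' ha.le (by norm_num)]
    norm_num
  have hodd : oddInv a ^ m ≤ ((a + 1 : ℝ) ^ 2)⁻¹ := calc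
    oddInv a ^ m ≤ oddInv a ^ 2 := pow_le_pow_of_le_one (oddInv_nonneg a) (oddInv_le_one a) hm
    _ ≤ ((a + 1 : ℝ) ^ 2)⁻¹ := by
        rw [oddInv, inv_pow]
        exact inv_anti₀ (by positivity) (pow_le_pow_left₀ ha.le (by push_cast; linarith) 2)
  calc oddInv a ^ m * (2 * √(a + 1)) ≤ ((a + 1 : ℝ) ^ 2)⁻¹ * (2 * √(a + 1)) :=
        mul_le_mul_of_nonneg_right hodd (by positivity)
    _ = 2 * (1 / |(a : ℝ) + 1| ^ (3 / 2 : ℝ)) := by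
        rw [hsqrt]
        field_simp
        rw [Real.sq_sqrt ha.le]

lemma Fin.antitone_cons_iff {α : Type*} [Preorder α] {n : ℕ} {x : α} {g : Fin n → α} :
    Antitone (Fin.cons x g : Fin (n + 1) → α) ↔ (∀ i, g i ≤ x) ∧ Antitone g := by
  refine ⟨fun h => ⟨fun i => by simpa using h (Fin.zero_le i.succ),
    fun i j hij => by simpa using h (Fin.succ_le_succ_iff.2 hij)⟩, ?_⟩
  rintro ⟨hx, hg⟩ i j hij
  cases i using Fin.cases with
  | zero =>
    cases j using Fin.cases with
    | zero => exact le_rfl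
    | succ j => exact hx j
  | succ i =>
    cases j using Fin.cases with
    | zero => exact absurd hij (Fin.succ_ne_zero i ∘ Fin.le_zero_iff.1)
    | succ j => exact hg (Fin.succ_le_succ_iff.1 hij)

lemma tsum_eq_tsum_two_mul_add_one {M : Type*} [AddCommMonoid M] [TopologicalSpace M] {F : ℕ → M}
    (hF : ∀ x, ¬Odd x → F x = 0) : ∑' x, F x = ∑' a, F (2 * a + 1) := by
  refine (Function.Injective.tsum_eq (fun a b h => by omega) fun x hx => ?_).symm
  obtain ⟨a, rfl⟩ := not_imp_comm.1 (hF x) hx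
  exact ⟨a, rfl⟩

lemma ofReal_oddInv_pow (i k : ℕ) :
    ENNReal.ofReal (oddInv i ^ k) = (((2 * i + 1 : ℕ) : ℝ≥0∞) ^ k)⁻¹ := by
  rw [oddInv, inv_pow, ENNReal.ofReal_inv_of_pos (by positivity),
    ENNReal.ofReal_pow (by positivity), ENNReal.ofReal_natCast]

open Classical in
/-- The `t*`-sum of `K` truncated to `m₁ ≤ b`, taken in `ℝ≥0∞` so that tuple sums can be split
along their first entry without summability side conditions. -/
noncomputable def oddStarSum (K : List ℕ) (b : ℕ) : ℝ≥0∞ :=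
  ∑' f : Fin K.length → ℕ,
    if (∀ i, Odd (f i)) ∧ Antitone f ∧ ∀ i, f i ≤ b then ∏ i, ((f i : ℝ≥0∞) ^ K.get i)⁻¹ else 0

open Classical in
lemma tsum_odd_antitone_cons (k : ℕ) (K : List ℕ) (p : ℕ → Prop) [DecidablePred p] :
    ∑' f : Fin (K.length + 1) → ℕ,
      (if (∀ i, Odd (f i)) ∧ Antitone f ∧ p (f 0) then
        ∏ i, ((f i : ℝ≥0∞) ^ (k :: K).get i)⁻¹ else 0)
      = ∑' x, if Odd x ∧ p x then ((x : ℝ≥0∞) ^ k)⁻¹ * oddStarSum K x else 0 := by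
  rw [← (Fin.consEquiv fun _ => ℕ).tsum_eq, ENNReal.tsum_prod']
  refine tsum_congr fun x => ?_
  have hcond : ∀ g : Fin K.length → ℕ,
      ((∀ i, Odd (Fin.cons (α := fun _ => ℕ) x g i)) ∧ Antitone (Fin.cons (α := fun _ => ℕ) x g) ∧
        p (Fin.cons (α := fun _ => ℕ) x g 0)) ↔
      (Odd x ∧ p x) ∧ (∀ i, Odd (g i)) ∧ Antitone g ∧ ∀ i, g i ≤ x := fun g => by
    simp only [Fin.forall_fin_succ, Fin.cons_zero, Fin.cons_succ, Fin.antitone_cons_iff]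
    tauto
  split_ifs with hx
  · rw [oddStarSum, ← ENNReal.tsum_mul_left]
    refine tsum_congr fun g => ?_
    rw [show (Fin.consEquiv fun _ => ℕ) (x, g) = Fin.cons x g from rfl]
    simp only [hcond, hx, true_and]
    split_ifs
    · simp [Fin.prod_univ_succ]
    · rw [mul_zero]
  · exact ENNReal.tsum_eq_zero.2 fun g => if_neg fun h => hx ((hcond g).1 h).1

lemma oddStarSum_nil (b : ℕ) : oddStarSum [] b = 1 := by
  simp [oddStarSum, show ∀ f : Fin 0 → ℕ, Antitone f from fun _ i => i.elim0]

lemma oddStarSum_cons (k : ℕ) (K : List ℕ) (b : ℕ) :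
    oddStarSum (k :: K) b =
      ∑' x, if Odd x ∧ x ≤ b then ((x : ℝ≥0∞) ^ k)⁻¹ * oddStarSum K x else 0 := by
  rw [← tsum_odd_antitone_cons k K (· ≤ b), oddStarSum]
  refine tsum_congr fun f =>
    if_congr (and_congr_right fun _ => and_congr_right fun hf => ?_) rfl rfl
  exact ⟨fun h => h 0, fun h i => (hf (Fin.zero_le i)).trans h⟩

lemma oddStarSum_replicate_one (n a : ℕ) :
    oddStarSum (List.replicate n 1) (2 * a + 1) = ENNReal.ofReal (completeHomSum oddInv n a) := by
  induction n generalizing a with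
  | zero => simp [oddStarSum_nil, completeHomSum]
  | succ n ih =>
    have hterm : ∀ b, ENNReal.ofReal (oddInv b * completeHomSum oddInv n b) =
        (((2 * b + 1 : ℕ) : ℝ≥0∞) ^ 1)⁻¹ * oddStarSum (List.replicate n 1) (2 * b + 1) := by
      intro b
      rw [ENNReal.ofReal_mul (oddInv_nonneg b), ← pow_one (oddInv b), ofReal_oddInv_pow, ih]
    rw [List.replicate_succ, oddStarSum_cons,
      tsum_eq_tsum_two_mul_add_one fun x hx => if_neg fun h => hx h.1,
      completeHomSum, ENNReal.ofReal_sum_of_nonneg fun b _ =>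
        mul_nonneg (oddInv_nonneg b) (completeHomSum.nonneg oddInv_nonneg n b),
      tsum_eq_sum (s := range (a + 1)) fun b hb => if_neg fun h => hb (by simp; omega)]
    exact sum_congr rfl fun b hb =>
      (if_pos ⟨odd_two_mul_add_one b, by simp at hb; omega⟩).trans (hterm b).symm

open Classical in
lemma multTStar_eq_toReal (K : List ℕ) :
    multTStar K = (∑' f : Fin K.length → ℕ,
      if (∀ i, Odd (f i)) ∧ Antitone f then ∏ i, ((f i : ℝ≥0∞) ^ K.get i)⁻¹ else 0).toReal := by
  rw [ENNReal.tsum_toReal_eq fun f => ?_, multTStar]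
  · refine tsum_congr fun f => ?_
    rw [← if_congr (and_congr_right' antitone_iff_forall_lt) rfl rfl]
    split_ifs
    · simp [ENNReal.toReal_prod]
    · rfl
  · split_ifs with h
    · exact ENNReal.prod_ne_top fun i _ =>
        ENNReal.inv_ne_top.2 (pow_ne_zero _ (Nat.cast_ne_zero.2 (h.1 i).pos.ne'))
    · exact ENNReal.zero_ne_top

lemma multTStar_cons (k : ℕ) (K : List ℕ) :
    multTStar (k :: K) =
      (∑' x : ℕ, if Odd x then ((x : ℝ≥0∞) ^ k)⁻¹ * oddStarSum K x else 0).toReal := by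
  simpa [multTStar_eq_toReal] using
    congrArg ENNReal.toReal (tsum_odd_antitone_cons k K fun _ => True)

theorem multTStar_cons_replicate_one (m n : ℕ) :
    multTStar (m :: List.replicate n 1) = ∑' a, oddInv a ^ m * completeHomSum oddInv n a := by
  have hterm : ∀ a, (((2 * a + 1 : ℕ) : ℝ≥0∞) ^ m)⁻¹ * oddStarSum (List.replicate n 1) (2 * a + 1) =
      ENNReal.ofReal (oddInv a ^ m * completeHomSum oddInv n a) := fun a => by
    rw [ENNReal.ofReal_mul (pow_nonneg (oddInv_nonneg a) m), ofReal_oddInv_pow,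
      oddStarSum_replicate_one]
  rw [multTStar_cons, tsum_eq_tsum_two_mul_add_one fun x hx => if_neg hx]
  simp only [odd_two_mul_add_one, if_true, hterm]
  rw [ENNReal.tsum_toReal_eq fun _ => ENNReal.ofReal_ne_top]
  exact tsum_congr fun a => ENNReal.toReal_ofReal
    (mul_nonneg (pow_nonneg (oddInv_nonneg a) m) (completeHomSum.nonneg oddInv_nonneg n a))

lemma poch_succ (a : ℂ) (n : ℕ) : poch a (n + 1) = poch a n * (a + n) := prod_range_succ _ _

lemma poch_succ' (a : ℂ) (n : ℕ) : poch a (n + 1) = a * poch (a + 1) n := by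
  rw [poch, prod_range_succ', poch, mul_comm]
  push_cast
  simp only [add_zero, add_assoc, add_comm (1 : ℂ)]

lemma poch_one_s5 (n : ℕ) : poch 1 n = n.factorial := by
  induction n with
  | zero => simp [poch]
  | succ n ih =>
    rw [poch_succ, ih, Nat.factorial_succ]
    push_cast
    ring

lemma poch_ne_zero {a : ℂ} {n : ℕ} (h : ∀ i < n, a + i ≠ 0) : poch a n ≠ 0 :=
  prod_ne_zero_iff.2 fun i hi => h i (mem_range.1 hi)

lemma prod_inv_one_sub_inv_odd_mul (z : ℂ) (n : ℕ) :
    ∏ i ∈ range n, (1 - (2 * (i : ℂ) + 1)⁻¹ * z)⁻¹ = poch (1 / 2) n / poch ((1 - z) / 2) n := by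
  rw [poch, poch, ← prod_div_distrib]
  refine prod_congr rfl fun i _ => ?_
  have hi : (2 * (i : ℂ) + 1) ≠ 0 := by exact_mod_cast (by omega : 2 * i + 1 ≠ 0)
  rw [inv_mul_eq_div, one_sub_div hi, inv_div, show (1 / 2 : ℂ) + i = (2 * i + 1) / 2 by ring,
    show (1 - z) / 2 + i = (2 * i + 1 - z) / 2 by ring, div_div_div_cancel_right₀ two_ne_zero]

theorem inv_one_sub_mul_hypF_term {m : ℕ} (hm : 0 < m) {z : ℂ} (hz : ∀ i : ℕ, z ≠ 2 * i + 1)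
    (a : ℕ) :
    (1 - z)⁻¹ * ((((1 : ℂ) :: List.replicate m (1 / 2)).map fun x => poch x a).prod /
      ((a.factorial : ℂ) * ((((3 - z) / 2) :: List.replicate (m - 1) (3 / 2)).map
        fun x => poch x a).prod) * 1 ^ a)
      = (2 * (a : ℂ) + 1)⁻¹ ^ m * ∏ i ∈ range (a + 1), (1 - (2 * (i : ℂ) + 1)⁻¹ * z)⁻¹ := by
  obtain ⟨k, rfl⟩ : ∃ k, m = k + 1 := ⟨m - 1, by omega⟩
  have hhalf : poch (1 / 2) a * (2 * a + 1) = poch (3 / 2) a := by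
    have h := (poch_succ (1 / 2) a).symm.trans (poch_succ' (1 / 2) a)
    rw [show (1 / 2 : ℂ) + 1 = 3 / 2 by norm_num] at h
    linear_combination 2 * h
  have hshift : poch ((1 - z) / 2) (a + 1) = (1 - z) / 2 * poch ((3 - z) / 2) a := by
    rw [poch_succ']
    ring_nf
  have hhalf0 : poch (1 / 2) a ≠ 0 := poch_ne_zero fun i _ h => by
    have := congrArg Complex.re h
    norm_num at this
    linarith [(i.cast_nonneg : (0 : ℝ) ≤ i)]
  have hz0 : poch ((3 - z) / 2) a ≠ 0 := poch_ne_zero fun i _ h =>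
    hz (i + 1) (by push_cast; linear_combination -2 * h)
  have h1z : 1 - z ≠ 0 := fun h => hz 0 (by push_cast; linear_combination -h)
  have ha : (2 * (a : ℂ) + 1) ≠ 0 := by exact_mod_cast (by omega : 2 * a + 1 ≠ 0)
  have hfac : (a.factorial : ℂ) ≠ 0 := Nat.cast_ne_zero.2 a.factorial_ne_zero
  simp only [List.map_cons, List.map_replicate, List.prod_cons, List.prod_replicate,
    Nat.add_sub_cancel, one_pow, mul_one, poch_one_s5]
  rw [prod_inv_one_sub_inv_odd_mul, hshift, poch_succ, ← hhalf,
    show (1 / 2 : ℂ) + a = (2 * a + 1) / 2 by ring, inv_pow, mul_pow]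
  field_simp
  ring

theorem hasSum_multTStar_cons_replicate_one_mul_pow {m : ℕ} (hm : 2 ≤ m) {v : ℝ}
    (hv : |v| ≤ 1 / 2) :
    HasSum (fun n => multTStar (m :: List.replicate n 1) * v ^ n)
      (∑' a, oddInv a ^ m * ∏ i ∈ range (a + 1), (1 - oddInv i * v)⁻¹) := by
  have hgen : ∀ {u : ℝ}, |u| ≤ 1 / 2 → ∀ a, HasSum
      (fun n => oddInv a ^ m * completeHomSum oddInv n a * u ^ n)
      (oddInv a ^ m * ∏ i ∈ range (a + 1), (1 - oddInv i * u)⁻¹) := by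
    intro u hu a
    have hconv : ∀ i ≤ a, oddInv i * |u| < 1 := fun i _ => by
      nlinarith [oddInv_le_one i, oddInv_nonneg i, abs_nonneg u]
    simpa only [mul_assoc] using
      (completeHomSum.hasSum_mul_pow oddInv_nonneg a hconv).mul_left (oddInv a ^ m)
  have hcoeff : ∀ a n, 0 ≤ oddInv a ^ m * completeHomSum oddInv n a := fun a n =>
    mul_nonneg (pow_nonneg (oddInv_nonneg a) m) (completeHomSum.nonneg oddInv_nonneg n a)
  have habs : |(|v|)| ≤ 1 / 2 := by rwa [abs_abs]
  simp_rw [multTStar_cons_replicate_one]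
  refine hasSum_tsum_mul_pow_of_nonneg hcoeff (hgen hv) (hgen habs) ?_
  refine (summable_oddInv_pow_mul_sqrt hm).of_nonneg_of_le
    (fun a => (hgen habs a).nonneg fun n => mul_nonneg (hcoeff a n) (by positivity))
    fun a => mul_le_mul_of_nonneg_left (prod_inv_one_sub_oddInv_mul_le habs a)
      (pow_nonneg (oddInv_nonneg a) m)

/-- For `m ≥ 2`, the generating function `∑_{n ≥ 1} t*(m, {1}^{n-1}) v^{n-1}` equals
`(1/(1-v)) ⬝ _{m+1}F_m(1, {1/2}^m; (3-v)/2, {3/2}^{m-1}; 1)`. -/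
theorem height_one_fixed_first_entry_multiple_t_star (m : ℕ) (hm : 2 ≤ m) :
    ∃ δ > (0 : ℝ), ∀ v : ℝ, |v| < δ →
      Summable (fun n : ℕ => multTStar (m :: List.replicate n 1) * v ^ n) ∧
      ((∑' n : ℕ, multTStar (m :: List.replicate n 1) * v ^ n : ℝ) : ℂ)
        = (1 - (v : ℂ))⁻¹ *
            hypF ((1 : ℂ) :: List.replicate m (1 / 2))
              (((3 - (v : ℂ)) / 2) :: List.replicate (m - 1) (3 / 2)) 1 := by
  refine ⟨1 / 2, by norm_num, fun v hv => ?_⟩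
  have hseries := hasSum_multTStar_cons_replicate_one_mul_pow hm hv.le
  have hpoles : ∀ i : ℕ, (v : ℂ) ≠ 2 * i + 1 := fun i h => by
    have hre := congrArg Complex.re h
    norm_num at hre
    linarith [le_abs_self v, (i.cast_nonneg : (0 : ℝ) ≤ i)]
  refine ⟨hseries.summable, ?_⟩
  rw [hseries.tsum_eq, Complex.ofReal_tsum, hypF, ← tsum_mul_left]
  refine tsum_congr fun a => ?_
  rw [inv_one_sub_mul_hypF_term (by omega) hpoles]
  push_cast [oddInv]
  rfl
end

section
/- For all real w with |w| < 1, 1 + ∑_{n ≥ 1} t({2}^n) w^n = exp( ∑_{n ≥ 1} ((−1)^{n−1}/n) t(2n) w^n ), both series converging absolutely; here t({2}^n) is the multiple t-value of the index consisting of the entry 2 repeated n times. -/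
open scoped BigOperators

/-! With `aᵢ = (2i+1)⁻²`, the sum defining `t({2}ⁿ)` runs over `n`-element sets of indices `i`,
so `t({2}ⁿ)` is the `n`-th elementary symmetric function of `(aᵢ)` and the left-hand side is the
product `∏ᵢ (1 + w aᵢ)`. Its logarithm is `∑ᵢ log (1 + w aᵢ)`; expanding each logarithm in its
Mercator series gives an absolutely convergent double series, which regrouped by powers of `w`
has coefficients `(-1)^(k-1)/k · ∑ᵢ aᵢᵏ = (-1)^(k-1)/k · t(2k)`. -/

open Finset

noncomputable def tsumEsymm {ι 𝕜 : Type*} [NormedField 𝕜] (f : ι → 𝕜) (n : ℕ) : 𝕜 :=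
  ∑' s : (Finset.card ⁻¹' {n} : Set (Finset ι)), ∏ i ∈ (s : Finset ι), f i

section tsumEsymm

variable {ι 𝕜 : Type*} [NormedField 𝕜] (f : ι → 𝕜)

theorem tsumEsymm_zero : tsumEsymm f 0 = 1 := by
  rw [tsumEsymm, tsum_eq_single ⟨∅, card_empty⟩]
  · exact prod_empty
  · rintro ⟨s, hs⟩ hne
    exact absurd (Subtype.ext (card_eq_zero.1 hs)) hne

theorem tsumEsymm_mul_left (c : 𝕜) (n : ℕ) :
    tsumEsymm (fun i => c * f i) n = c ^ n * tsumEsymm f n := by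
  rw [tsumEsymm, tsumEsymm, ← tsum_mul_left]
  refine tsum_congr fun s => ?_
  rw [prod_mul_distrib, prod_const, show (s : Finset ι).card = n from s.2]

theorem hasSum_tsumEsymm [CompleteSpace 𝕜] (hf : Summable fun i => ‖f i‖) :
    HasSum (tsumEsymm f) (∏' i, (1 + f i)) := by
  have h := (summable_finsetProd_of_summable_norm hf).hasSum
  rw [(hasProd_one_add_of_hasSum_prod h).tprod_eq]
  exact h.tsum_fiberwise Finset.card

end tsumEsymm

section OddTuple

variable {n : ℕ}

-- `orderEmbOfFin` lists `s` increasingly; `j.rev` turns this into the decreasing order of `multT`.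
def oddTuple (s : (Finset.card ⁻¹' {n} : Set (Finset ℕ))) (j : Fin n) : ℕ :=
  2 * (s : Finset ℕ).orderEmbOfFin s.2 j.rev + 1

theorem odd_oddTuple (s : (Finset.card ⁻¹' {n} : Set (Finset ℕ))) (j : Fin n) :
    Odd (oddTuple s j) :=
  odd_two_mul_add_one _

theorem oddTuple_strictAnti (s : (Finset.card ⁻¹' {n} : Set (Finset ℕ))) :
    StrictAnti (oddTuple s) := fun _ _ hij => by
  have := (s : Finset ℕ).orderEmbOfFin s.2 |>.strictMono (Fin.rev_lt_rev.2 hij)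
  unfold oddTuple
  omega

theorem oddTuple_injective : Function.Injective (oddTuple (n := n)) := by
  rintro s t hst
  have hemb : ⇑((s : Finset ℕ).orderEmbOfFin s.2) = (t : Finset ℕ).orderEmbOfFin t.2 := by
    funext j
    have := congrFun hst j.rev
    simp only [oddTuple, Fin.rev_rev] at this
    omega
  apply Subtype.ext
  rw [← image_orderEmbOfFin_univ (s : Finset ℕ) s.2, ← image_orderEmbOfFin_univ (t : Finset ℕ) t.2,
    hemb]

theorem mem_range_oddTuple {m : Fin n → ℕ} (hodd : ∀ j, Odd (m j)) (hm : StrictAnti m) :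
    m ∈ Set.range oddTuple := by
  set q : Fin n → ℕ := fun j => m j.rev / 2
  have hq : ∀ j, 2 * q j + 1 = m j.rev := fun j => by
    obtain ⟨c, hc⟩ := hodd j.rev
    simp only [q]
    omega
  have hqmono : StrictMono q := fun j j' hjj' => by
    have := hm (Fin.rev_lt_rev.2 hjj')
    have := hq j
    have := hq j'
    omega
  have hcard : (univ.image q).card = n := by
    rw [card_image_of_injective _ hqmono.injective, card_univ, Fintype.card_fin]
  refine ⟨⟨univ.image q, hcard⟩, funext fun j => ?_⟩
  have := orderEmbOfFin_unique hcard (fun j => mem_image_of_mem q (mem_univ j)) hqmono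
  simp only [oddTuple, ← this, hq, Fin.rev_rev]

theorem prod_oddTuple {M : Type*} [CommMonoid M] (φ : ℕ → M)
    (s : (Finset.card ⁻¹' {n} : Set (Finset ℕ))) :
    ∏ j, φ (oddTuple s j) = ∏ i ∈ (s : Finset ℕ), φ (2 * i + 1) := by
  rw [← image_orderEmbOfFin_univ (s : Finset ℕ) s.2,
    prod_image fun _ _ _ _ h => ((s : Finset ℕ).orderEmbOfFin s.2).injective h]
  exact Fintype.prod_equiv Fin.revPerm _ _ fun j => by simp [oddTuple]

end OddTuple

theorem tsum_odd_strictAnti_eq_tsumEsymm {𝕜 : Type*} [NormedField 𝕜] (n : ℕ) (φ : ℕ → 𝕜) :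
    ∑' m : Fin n → ℕ,
      (if (∀ i, Odd (m i)) ∧ (∀ i j : Fin n, i < j → m j < m i) then ∏ i, φ (m i) else 0) =
    tsumEsymm (fun i => φ (2 * i + 1)) n := by
  rw [tsumEsymm, ← oddTuple_injective.tsum_eq]
  · refine tsum_congr fun s => ?_
    rw [if_pos ⟨odd_oddTuple s, fun _ _ hij => oddTuple_strictAnti s hij⟩, prod_oddTuple]
  · intro m hm
    obtain ⟨hodd, hanti⟩ := of_not_not fun h => hm (if_neg h)
    exact mem_range_oddTuple hodd fun _ _ hij => hanti _ _ hij

theorem multT_replicate (n k : ℕ) :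
    multT (List.replicate n k) = tsumEsymm (fun i : ℕ => ((2 * i + 1 : ℝ) ^ k)⁻¹) n := by
  simp only [multT, List.get_eq_getElem, List.getElem_replicate]
  rw [List.length_replicate]
  convert tsum_odd_strictAnti_eq_tsumEsymm n (fun m => ((m : ℝ) ^ k)⁻¹) using 2
  push_cast
  rfl

theorem hasSum_log_one_add_of_abs_lt_one {x : ℝ} (hx : |x| < 1) :
    HasSum (fun k : ℕ => (-1) ^ k / (k + 1) * x ^ (k + 1)) (Real.log (1 + x)) := by
  have h := (Real.hasSum_pow_div_log_of_abs_lt_one (x := -x) (by rwa [abs_neg])).neg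
  rw [sub_neg_eq_add, neg_neg] at h
  refine h.congr_fun fun k => ?_
  rw [neg_pow x, pow_succ (-1 : ℝ)]
  ring

theorem hasSum_tsum_log_one_add {ι : Type*} {f : ι → ℝ} (hf : Summable f)
    (hf1 : ∀ i, |f i| < 1) :
    HasSum (fun k : ℕ => (-1) ^ k / (k + 1) * ∑' i, f i ^ (k + 1)) (∑' i, Real.log (1 + f i)) := by
  set F : ι × ℕ → ℝ := fun p => (-1) ^ p.2 / (p.2 + 1) * f p.1 ^ (p.2 + 1)
  have hnorm : ∀ p, ‖F p‖ = |f p.1| ^ (p.2 + 1) / (p.2 + 1) := fun p => by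
    simp only [F, norm_mul, norm_div, norm_pow, norm_neg, norm_one, one_pow, Real.norm_eq_abs]
    rw [abs_of_pos (Nat.cast_add_one_pos p.2)]
    ring
  -- the absolute series sums to `-log (1 - |f i|)`, which is summable in `i`
  have hF : Summable F := by
    refine Summable.of_norm ?_
    simp only [hnorm]
    refine (summable_prod_of_nonneg fun p => by positivity).2 ⟨fun i => ?_, ?_⟩
    · exact (Real.hasSum_pow_div_log_of_abs_lt_one ((abs_abs (f i)).trans_lt (hf1 i))).summable
    · refine (Real.summable_log_one_add_of_summable hf.abs.neg).neg.congr fun i => ?_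
      rw [(Real.hasSum_pow_div_log_of_abs_lt_one ((abs_abs (f i)).trans_lt (hf1 i))).tsum_eq,
        sub_eq_add_neg]
  have hcol : ∀ k, ∑' i, F (i, k) = (-1) ^ k / (k + 1) * ∑' i, f i ^ (k + 1) := fun k => by
    simp only [F, tsum_mul_left]
  have hrow : ∀ i, ∑' k, F (i, k) = Real.log (1 + f i) := fun i =>
    (hasSum_log_one_add_of_abs_lt_one (hf1 i)).tsum_eq
  have hsum : Summable fun k => ∑' i, F (i, k) := hF.prod_symm.prod
  have hcomm : ∑' i, ∑' k, F (i, k) = ∑' k, ∑' i, F (i, k) := (hF.tsum_comm).symm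
  rw [← funext hcol, ← tsum_congr hrow, hcomm]
  exact hsum.hasSum

theorem tval_mul (p k : ℕ) : tval (p * k) = ∑' i : ℕ, (((2 * i + 1 : ℝ) ^ p)⁻¹) ^ k := by
  simp only [tval, one_div, inv_pow, pow_mul]

theorem summable_inv_two_mul_add_one_pow {p : ℕ} (hp : 1 < p) :
    Summable fun i : ℕ => ((2 * i + 1 : ℝ) ^ p)⁻¹ := by
  have h := (Real.summable_nat_pow_inv.2 hp).comp_injective (i := fun i : ℕ => 2 * i + 1)
    fun _ _ h => by simp only at h; omega
  exact h.congr fun i => by simp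

/-- `1 + ∑_{n ≥ 1} t({2}ⁿ) wⁿ = exp(∑_{n ≥ 1} ((-1)^{n-1}/n) t(2n) wⁿ)` for `|w| < 1`. -/
theorem t_two_repeated_generating_function (w : ℝ) (hw : |w| < 1) :
    Summable (fun n : ℕ => multT (List.replicate (n + 1) 2) * w ^ (n + 1)) ∧
    Summable (fun n : ℕ =>
      (-1 : ℝ) ^ n / (n + 1) * tval (2 * (n + 1)) * w ^ (n + 1)) ∧
    1 + ∑' n : ℕ, multT (List.replicate (n + 1) 2) * w ^ (n + 1)
      = Real.exp (∑' n : ℕ,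
          (-1 : ℝ) ^ n / (n + 1) * tval (2 * (n + 1)) * w ^ (n + 1)) := by
  set a : ℕ → ℝ := fun i => ((2 * i + 1 : ℝ) ^ 2)⁻¹
  have ha : Summable a := summable_inv_two_mul_add_one_pow one_lt_two
  have ha_mem : ∀ i, 0 < a i ∧ a i ≤ 1 := fun i =>
    ⟨by positivity, inv_le_one_of_one_le₀ (one_le_pow₀ (by linarith [i.cast_nonneg (α := ℝ)]))⟩
  have hwa : ∀ i, |w * a i| < 1 := fun i => by
    rw [abs_mul, abs_of_pos (ha_mem i).1]
    exact mul_lt_one_of_nonneg_of_lt_one_left (abs_nonneg w) hw (ha_mem i).2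
  have hgen : HasSum (fun n => multT (List.replicate n 2) * w ^ n) (∏' i, (1 + w * a i)) := by
    have h := hasSum_tsumEsymm (fun i => w * a i) (ha.mul_left w).norm
    rw [funext (tsumEsymm_mul_left a w)] at h
    exact h.congr_fun fun n => by rw [multT_replicate, mul_comm]
  have hlog : HasSum (fun n : ℕ => (-1 : ℝ) ^ n / (n + 1) * tval (2 * (n + 1)) * w ^ (n + 1))
      (∑' i, Real.log (1 + w * a i)) := by
    refine (hasSum_tsum_log_one_add (ha.mul_left w) hwa).congr_fun fun n => ?_
    simp only [mul_pow, tsum_mul_left, tval_mul]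
    ring
  have hexp : Real.exp (∑' i, Real.log (1 + w * a i)) = ∏' i, (1 + w * a i) :=
    Real.rexp_tsum_eq_tprod (fun i => by linarith [neg_abs_le (w * a i), hwa i])
      (Real.summable_log_one_add_of_summable (ha.mul_left w))
  refine ⟨(summable_nat_add_iff 1).2 hgen.summable, hlog.summable, ?_⟩
  rw [hlog.tsum_eq, hexp, ← hgen.tsum_eq, hgen.summable.tsum_eq_zero_add, multT_replicate,
    tsumEsymm_zero, pow_zero, mul_one]
end

section
/- For every complex number z with |z| < 1, Γ((1−z)/2) = √π · 2^z · exp( γz/2 + ∑_{n ≥ 2} (t(n)/n) z^n ), where Γ is the Gamma function, γ is the Euler–Mascheroni constant, and the series converges absolutely. -/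
open scoped BigOperators

/-!
Legendre's duplication formula gives `Γ((1-z)/2) Γ(1-z/2) = √π 2^z Γ(1-z)`, so the claim follows
from the classical expansion `Γ(1-w) = exp(γw + ∑_{n≥2} ζ(n)/n wⁿ)` at `w = z` and `w = z/2`,
together with `t(n) = (1 - 2⁻ⁿ) ζ(n)`. The classical expansion comes from Euler's limit
`Γ(s) = lim nˢ n! / (s (s+1) ⋯ (s+n))`: at `s = 1 - w` the product becomes `(n+1)! ∏ (1 - w/(j+1))`,
and expanding each `-log (1 - w/(j+1))` as a power series and summing over `j` first produces the
zeta values; the interchange is justified by absolute convergence of the double series.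
-/

section

open Filter Topology Finset
open scoped Nat

lemma hasSum_riemannZeta_nat {k : ℕ} (hk : 2 ≤ k) :
    HasSum (fun n : ℕ => ((n : ℂ) ^ k)⁻¹) (riemannZeta k) := by
  have hs : Summable (fun n : ℕ => ((n : ℂ) ^ k)⁻¹) := by
    refine Summable.of_norm ?_
    simpa [one_div] using Real.summable_one_div_nat_pow.mpr hk
  simpa [zeta_nat_eq_tsum_of_gt_one hk] using hs.hasSum

lemma hasSum_riemannZeta_nat_add_one {k : ℕ} (hk : 2 ≤ k) :
    HasSum (fun j : ℕ => (((j : ℂ) + 1) ^ k)⁻¹) (riemannZeta k) := by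
  have h := (hasSum_nat_add_iff' 1).mpr (hasSum_riemannZeta_nat hk)
  simpa [zero_pow (by omega : k ≠ 0)] using h

lemma tval_eq_one_sub_two_inv_pow_mul_riemannZeta {k : ℕ} (hk : 2 ≤ k) :
    (tval k : ℂ) = (1 - 2⁻¹ ^ k) * riemannZeta k := by
  let f : ℕ → ℂ := fun n => ((n : ℂ) ^ k)⁻¹
  have hf : HasSum f (riemannZeta k) := hasSum_riemannZeta_nat hk
  have heven : ∀ j, f (2 * j) = 2⁻¹ ^ k * f j := fun j => by
    simp only [f]; push_cast; rw [mul_pow, mul_inv, inv_pow]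
  have hodd : ∀ j, f (2 * j + 1) = ((1 / (2 * (j : ℝ) + 1) ^ k : ℝ) : ℂ) := fun j => by
    simp only [f]; push_cast; rw [one_div]
  have hsplit := tsum_even_add_odd (hf.summable.comp_injective (mul_right_injective₀ two_ne_zero))
    (hf.summable.comp_injective ((add_left_injective 1).comp (mul_right_injective₀ two_ne_zero)))
  rw [tsum_congr heven, tsum_congr hodd, tsum_mul_left, hf.tsum_eq, ← Complex.ofReal_tsum] at hsplit
  rw [tval]
  linear_combination hsplit

lemma Complex.hasSum_pow_div_add_two {x : ℂ} (hx : ‖x‖ < 1) :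
    HasSum (fun m : ℕ => x ^ (m + 2) / (m + 2)) (-Complex.log (1 - x) - x) := by
  have h := (hasSum_nat_add_iff' 2).mpr (Complex.hasSum_taylorSeries_neg_log hx)
  simpa [Finset.sum_range_succ] using h

lemma Complex.norm_natCast_add_one (j : ℕ) : ‖(j : ℂ) + 1‖ = j + 1 := by
  exact_mod_cast Complex.norm_natCast (j + 1)

lemma prod_range_one_sub_add_natCast (w : ℂ) (n : ℕ) :
    ∏ j ∈ range n, (1 - w + j) = n ! * ∏ j ∈ range n, (1 - w / (j + 1)) := by
  have hfac : ∏ j ∈ range n, ((j : ℂ) + 1) = n ! := by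
    exact_mod_cast prod_range_add_one_eq_factorial n
  rw [← hfac, ← prod_mul_distrib]
  refine prod_congr rfl fun j _ => ?_
  field_simp
  ring

section
variable {w : ℂ}

lemma norm_div_natCast_add_one_lt_one (hw : ‖w‖ < 1) (j : ℕ) : ‖w / ((j : ℂ) + 1)‖ < 1 := by
  rw [norm_div, Complex.norm_natCast_add_one]
  exact (div_le_self (norm_nonneg w) (by simp)).trans_lt hw

lemma summable_inv_pow_mul_pow_div (hw : ‖w‖ < 1) :
    Summable (fun p : ℕ × ℕ => (((p.1 : ℂ) + 1) ^ (p.2 + 2))⁻¹ * (w ^ (p.2 + 2) / (p.2 + 2))) := by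
  have hzeta : Summable (fun j : ℕ => (((j : ℝ) + 1) ^ 2)⁻¹) := by
    exact_mod_cast (summable_nat_add_iff 1).mpr (Real.summable_nat_pow_inv.mpr one_lt_two)
  have hbound : Summable (fun p : ℕ × ℕ => (((p.1 : ℝ) + 1) ^ 2)⁻¹ * ‖w‖ ^ p.2) :=
    hzeta.mul_of_nonneg (summable_geometric_of_lt_one (norm_nonneg w) hw)
      (fun _ => by positivity) (fun _ => by positivity)
  refine Summable.of_norm_bounded hbound fun ⟨j, m⟩ => ?_
  have hm : ‖((m : ℂ) + 2)‖ = m + 2 := by exact_mod_cast Complex.norm_natCast (m + 2)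
  simp only [norm_mul, norm_inv, norm_pow, norm_div, Complex.norm_natCast_add_one, hm]
  gcongr ?_ * ?_
  · exact inv_anti₀ (by positivity) (pow_le_pow_right₀ (by simp) (by omega))
  · calc ‖w‖ ^ (m + 2) / (m + 2) ≤ ‖w‖ ^ (m + 2) := div_le_self (by positivity) (by linarith)
      _ ≤ ‖w‖ ^ m := pow_le_pow_of_le_one (norm_nonneg w) hw.le (by omega)

lemma hasSum_inv_pow_mul_pow_div_riemannZeta (m : ℕ) :
    HasSum (fun j : ℕ => (((j : ℂ) + 1) ^ (m + 2))⁻¹ * (w ^ (m + 2) / (m + 2)))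
      (riemannZeta (m + 2) / (m + 2) * w ^ (m + 2)) := by
  have h := (hasSum_riemannZeta_nat_add_one (k := m + 2) (by omega)).mul_right (w ^ (m + 2) / (m + 2))
  push_cast at h
  rwa [div_mul_eq_mul_div, mul_div_assoc]

lemma hasSum_inv_pow_mul_pow_div_neg_log (hw : ‖w‖ < 1) (j : ℕ) :
    HasSum (fun m : ℕ => (((j : ℂ) + 1) ^ (m + 2))⁻¹ * (w ^ (m + 2) / (m + 2)))
      (-Complex.log (1 - w / (j + 1)) - w / (j + 1)) := by
  convert Complex.hasSum_pow_div_add_two (norm_div_natCast_add_one_lt_one hw j) using 2 with m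
  rw [div_pow]
  ring

lemma summable_riemannZeta_div_mul_pow (hw : ‖w‖ < 1) :
    Summable (fun m : ℕ => riemannZeta (m + 2) / (m + 2) * w ^ (m + 2)) :=
  ((summable_inv_pow_mul_pow_div hw).prod_symm.hasSum.prod_fiberwise
    hasSum_inv_pow_mul_pow_div_riemannZeta).summable

lemma hasSum_neg_log_one_sub_div_sub (hw : ‖w‖ < 1) :
    HasSum (fun j : ℕ => -Complex.log (1 - w / (j + 1)) - w / (j + 1))
      (∑' m : ℕ, riemannZeta (m + 2) / (m + 2) * w ^ (m + 2)) := by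
  have hF := summable_inv_pow_mul_pow_div hw
  have hcols := ((Equiv.prodComm ℕ ℕ).hasSum_iff.mpr hF.hasSum).prod_fiberwise
    hasSum_inv_pow_mul_pow_div_riemannZeta
  rw [hcols.tsum_eq]
  exact hF.hasSum.prod_fiberwise (hasSum_inv_pow_mul_pow_div_neg_log hw)

lemma prod_range_one_sub_div_eq_exp (hw : ‖w‖ < 1) (n : ℕ) :
    ∏ j ∈ range n, (1 - w / (j + 1)) = Complex.exp
      (-(w * harmonic n + ∑ j ∈ range n, (-Complex.log (1 - w / (j + 1)) - w / (j + 1)))) := by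
  have hH : w * harmonic n = ∑ j ∈ range n, w / (j + 1) := by
    simp [harmonic, mul_sum, div_eq_mul_inv]
  rw [hH, ← sum_add_distrib, ← sum_neg_distrib, Complex.exp_sum]
  refine prod_congr rfl fun j _ => ?_
  rw [add_sub_cancel, neg_neg, Complex.exp_log]
  intro h
  have := norm_div_natCast_add_one_lt_one hw j
  rw [← sub_eq_zero.mp h, norm_one] at this
  exact this.false

lemma GammaSeq_one_sub_eq (hw : ‖w‖ < 1) {n : ℕ} (hn : n ≠ 0) :
    Complex.GammaSeq (1 - w) n = n / (n + 1) *
      Complex.exp (w * (((harmonic (n + 1) : ℝ) - Real.log n : ℝ) : ℂ)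
        + ∑ j ∈ range (n + 1), (-Complex.log (1 - w / (j + 1)) - w / (j + 1))) := by
  have hcpow : (n : ℂ) ^ (1 - w) = n * Complex.exp (-(w * Real.log n)) := by
    rw [Complex.cpow_def_of_ne_zero (by exact_mod_cast hn), ← Complex.natCast_log, mul_sub, mul_one,
      sub_eq_add_neg, Complex.exp_add, mul_comm (Real.log n : ℂ), Complex.natCast_log,
      Complex.exp_log (by exact_mod_cast hn)]
  have hexp : w * (((harmonic (n + 1) : ℝ) - Real.log n : ℝ) : ℂ)
      + ∑ j ∈ range (n + 1), (-Complex.log (1 - w / (j + 1)) - w / (j + 1))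
      = (w * harmonic (n + 1) + ∑ j ∈ range (n + 1), (-Complex.log (1 - w / (j + 1)) - w / (j + 1)))
        - w * Real.log n := by
    push_cast
    ring
  rw [Complex.GammaSeq, prod_range_one_sub_add_natCast, prod_range_one_sub_div_eq_exp hw, hcpow,
    hexp, Complex.exp_sub, Complex.exp_neg, Complex.exp_neg, Nat.factorial_succ]
  generalize ha : Complex.exp (w * Real.log n) = a
  generalize hb : Complex.exp (w * harmonic (n + 1) + _) = b
  have ha0 : a ≠ 0 := ha ▸ Complex.exp_ne_zero _
  have hb0 : b ≠ 0 := hb ▸ Complex.exp_ne_zero _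
  have hn1 : (n : ℂ) + 1 ≠ 0 := by exact_mod_cast n.succ_ne_zero
  have hfac : (n ! : ℂ) ≠ 0 := by exact_mod_cast n.factorial_ne_zero
  push_cast
  field_simp

end

lemma tendsto_harmonic_add_one_sub_log :
    Tendsto (fun n : ℕ => (harmonic (n + 1) : ℝ) - Real.log n) atTop
      (𝓝 Real.eulerMascheroniConstant) := by
  have h := Real.tendsto_harmonic_sub_log.add (tendsto_one_div_add_atTop_nhds_zero_nat (𝕜 := ℝ))
  rw [add_zero] at h
  refine h.congr fun n => ?_
  rw [harmonic_succ]
  push_cast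
  ring

theorem Complex.Gamma_one_sub_eq_exp {w : ℂ} (hw : ‖w‖ < 1) :
    Complex.Gamma (1 - w) = Complex.exp (Real.eulerMascheroniConstant * w +
      ∑' m : ℕ, riemannZeta (m + 2) / (m + 2) * w ^ (m + 2)) := by
  refine tendsto_nhds_unique (Complex.GammaSeq_tendsto_Gamma (1 - w)) ?_
  have hratio : Tendsto (fun n : ℕ => (n : ℂ) / (n + 1)) atTop (𝓝 1) :=
    tendsto_natCast_div_add_atTop 1
  have hharm := ((Complex.continuous_ofReal.tendsto _).comp
    tendsto_harmonic_add_one_sub_log).const_mul w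
  have hlog := (hasSum_neg_log_one_sub_div_sub hw).tendsto_sum_nat.comp (tendsto_add_atTop_nat 1)
  have h := hratio.mul (hharm.add hlog).cexp
  rw [one_mul, mul_comm w] at h
  refine h.congr' ?_
  filter_upwards [eventually_ne_atTop 0] with n hn
  exact (GammaSeq_one_sub_eq hw hn).symm

lemma hasSum_tval_div_mul_pow {z : ℂ} (hz : ‖z‖ < 1) :
    HasSum (fun n : ℕ => ((tval (n + 2) : ℂ) / (n + 2)) * z ^ (n + 2))
      ((∑' m : ℕ, riemannZeta (m + 2) / (m + 2) * z ^ (m + 2))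
        - ∑' m : ℕ, riemannZeta (m + 2) / (m + 2) * (z / 2) ^ (m + 2)) := by
  have hz2 : ‖z / 2‖ < 1 := by rw [norm_div, Complex.norm_ofNat]; linarith
  refine ((summable_riemannZeta_div_mul_pow hz).hasSum.sub
    (summable_riemannZeta_div_mul_pow hz2).hasSum).congr_fun fun m => ?_
  rw [tval_eq_one_sub_two_inv_pow_mul_riemannZeta (by omega : 2 ≤ m + 2)]
  push_cast
  ring

lemma Complex.Gamma_one_sub_div_two_mul_Gamma_one_sub_half (z : ℂ) :
    Complex.Gamma ((1 - z) / 2) * Complex.Gamma (1 - z / 2) =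
      Complex.Gamma (1 - z) * 2 ^ z * Real.sqrt Real.pi := by
  convert Complex.Gamma_mul_Gamma_add_half ((1 - z) / 2) using 3 <;> ring_nf

end

/-- Expansion of the Gamma function in terms of single `t`-values:
`Γ((1-z)/2) = √π ⬝ 2^z ⬝ exp(γz/2 + ∑_{n≥2} (t(n)/n) zⁿ)` for `|z| < 1`. -/
theorem Gamma_eq_sqrt_pi_two_cpow_exp_tval (z : ℂ) (hz : ‖z‖ < 1) :
    Summable (fun n : ℕ => ((tval (n + 2) : ℂ) / (n + 2)) * z ^ (n + 2)) ∧
    Complex.Gamma ((1 - z) / 2)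
      = (Real.sqrt Real.pi : ℂ) * (2 : ℂ) ^ z *
          Complex.exp ((Real.eulerMascheroniConstant : ℂ) * z / 2 +
            ∑' n : ℕ, ((tval (n + 2) : ℂ) / (n + 2)) * z ^ (n + 2)) := by
  have hz2 : ‖z / 2‖ < 1 := by rw [norm_div, Complex.norm_ofNat]; linarith
  have hseries := hasSum_tval_div_mul_pow hz
  refine ⟨hseries.summable, ?_⟩
  have hdup := Complex.Gamma_one_sub_div_two_mul_Gamma_one_sub_half z
  rw [Complex.Gamma_one_sub_eq_exp hz, Complex.Gamma_one_sub_eq_exp hz2] at hdup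
  set A := ∑' m : ℕ, riemannZeta (m + 2) / (m + 2) * z ^ (m + 2)
  set B := ∑' m : ℕ, riemannZeta (m + 2) / (m + 2) * (z / 2) ^ (m + 2)
  have hexp : Real.eulerMascheroniConstant * z / 2 + (A - B)
      = (Real.eulerMascheroniConstant * z + A) - (Real.eulerMascheroniConstant * (z / 2) + B) := by
    ring
  rw [hseries.tsum_eq, ← mul_div_cancel_right₀ (Complex.Gamma _) (Complex.exp_ne_zero _), hdup, hexp,
    Complex.exp_sub]
  ring
end
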